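/- If a truth assignment σ satisfies all clauses of a 3-SAT instance, then in the associated reduction graph there is a path from s to t with pairwise distinct edge labels: for each variable x_j take the branch corresponding to the polarity NOT chosen by σ (i.e., if σ(x_j) = true, take the branch labeled with negative literals ¬x_j; if false, take the positive branch), and for each clause take an edge labeled by a literal made true by σ. -/

import Mathlib

structure LabeledGraph (V E L : Type) where
  src : E → V
  tgt : E → V
  lab : E → L

variable {V E L : Type}

def IsWalk (G : LabeledGraph V E L) : V → V → List E → Prop
  | s, t, [] => s = t
  | s, t, e :: es => G.src e = s ∧ IsWalk G (G.tgt e) t es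

def Feasible (G : LabeledGraph V E L) (p : List E) : Prop :=
  (p.map G.lab).Nodup

/-! ## The 3-SAT to SPUL reduction graph

A 3-SAT instance with `n` variables and `m` clauses is given by
`C : Fin m → Fin 3 → Fin n × Bool`, where `C i k = (j, b)` means the `k`-th
literal of clause `C_i` is variable `x_j` with polarity `b`
(`b = true` : positive literal `x_j`; `b = false` : negated literal `¬x_j`). -/

/-- The list of occurrences (clause index, position) of the literal `(j, b)`. -/
def occList {n m : ℕ} (C : Fin m → Fin 3 → Fin n × Bool) (j : Fin n) (b : Bool) :
    List (Fin m × Fin 3) :=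
  ((List.finRange m) ×ˢ (List.finRange 3)).filter (fun q => C q.1 q.2 = (j, b))

/-- Number of edges of the branch of the variable gadget for `x_j` carrying
polarity `b`: one edge per occurrence of the literal `(j, b)` in the clauses,
or a single (dummy-labeled) edge if the literal does not occur. -/
def branchLen {n m : ℕ} (C : Fin m → Fin 3 → Fin n × Bool) (j : Fin n) (b : Bool) : ℕ :=
  max 1 (occList C j b).length

/-- Vertices of the reduction graph: the junction vertices
`s = u_0, u_1, …, u_n = w_0, w_1, …, w_m = t` (as `Fin (n+m+1)`, where `u_j` is
junction `j` and `w_i` is junction `n + i`), together with internal vertices of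
the variable-gadget branches. -/
abbrev RedV {n m : ℕ} (C : Fin m → Fin 3 → Fin n × Bool) : Type :=
  Fin (n + m + 1) ⊕ (Σ j : Fin n, Σ b : Bool, Fin (branchLen C j b))

/-- Edges of the reduction graph: `inl ⟨j, b, r⟩` is the `r`-th edge of the
branch of variable gadget `x_j` with polarity `b`; `inr (i, k)` is the clause
edge for the `k`-th literal of clause `C_i`. -/
abbrev RedE {n m : ℕ} (C : Fin m → Fin 3 → Fin n × Bool) : Type :=
  (Σ j : Fin n, Σ b : Bool, Fin (branchLen C j b)) ⊕ (Fin m × Fin 3)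

/-- Labels: `inl (i, k)` identifies the occurrence of a literal at position `k`
of clause `C_i` (this label appears both on the corresponding variable-branch
edge and on the corresponding clause edge); `inr (j, b)` is the dummy label for
the branch of a literal occurring in no clause. -/
abbrev RedL (n m : ℕ) : Type := (Fin m × Fin 3) ⊕ (Fin n × Bool)

/-- The reduction graph: in series, for each variable `x_j` two parallel
branches from `u_{j-1}` to `u_j` (the branch of polarity `b` being a directed
path whose edges carry the labels of the occurrences of literal `(j, b)`),
followed by, for each clause `C_i`, three parallel edges from `w_{i-1}` to
`w_i` labeled by the three literal occurrences of `C_i`. -/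
def redGraph (n m : ℕ) (C : Fin m → Fin 3 → Fin n × Bool) :
    LabeledGraph (RedV C) (RedE C) (RedL n m) where
  src e :=
    match e with
    | Sum.inl ⟨j, b, r⟩ =>
        if r.val = 0 then Sum.inl ⟨j.val, by have := j.isLt; omega⟩
        else Sum.inr ⟨j, b, ⟨r.val - 1, by have := r.isLt; omega⟩⟩
    | Sum.inr (i, _) => Sum.inl ⟨n + i.val, by have := i.isLt; omega⟩
  tgt e :=
    match e with
    | Sum.inl ⟨j, b, r⟩ =>
        if r.val = branchLen C j b - 1 then Sum.inl ⟨j.val + 1, by have := j.isLt; omega⟩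
        else Sum.inr ⟨j, b, r⟩
    | Sum.inr (i, _) => Sum.inl ⟨n + i.val + 1, by have := i.isLt; omega⟩
  lab e :=
    match e with
    | Sum.inl ⟨j, b, r⟩ =>
        if h : occList C j b = [] then Sum.inr (j, b)
        else Sum.inl ((occList C j b).getD r.val ((occList C j b).head h))
    | Sum.inr q => Sum.inl q

/-- Start vertex `s = u_0`. -/
def redS (n m : ℕ) (C : Fin m → Fin 3 → Fin n × Bool) : RedV C :=
  Sum.inl ⟨0, by omega⟩

/-- Target vertex `t = w_m`. -/
def redT (n m : ℕ) (C : Fin m → Fin 3 → Fin n × Bool) : RedV C :=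
  Sum.inl ⟨n + m, by omega⟩

/-!
Every label names a literal (`labelLiteral`): an occurrence label names the literal occurring
there, a dummy label names its own literal, and all labels on the branch of a literal name that
literal, without repetition. The path runs through the branch of the literal that `σ` makes false
at every variable, so its variable part carries distinct labels of false literals, while its
clause part uses one edge per clause whose literal is true. Hence no label occurs twice.
-/

theorem IsWalk.append {G : LabeledGraph V E L} {s v t : V} {p q : List E}
    (hp : IsWalk G s v p) (hq : IsWalk G v t q) : IsWalk G s t (p ++ q) := by
  induction p generalizing s with
  | nil => cases hp; exact hq
  | cons e es ih => exact ⟨hp.1, ih hp.2⟩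

theorem isWalk_flatMap_finRange {G : LabeledGraph V E L} {k : ℕ} (v : Fin (k + 1) → V)
    (w : Fin k → List E) (hw : ∀ i, IsWalk G (v i.castSucc) (v i.succ) (w i)) :
    IsWalk G (v 0) (v (Fin.last k)) ((List.finRange k).flatMap w) := by
  induction k with
  | zero => rfl
  | succ k ih =>
    rw [List.finRange_succ, List.flatMap_cons, List.flatMap_map]
    exact (hw 0).append (ih (v ∘ Fin.succ) (w ∘ Fin.succ) fun i => hw i.succ)

theorem isWalk_map_finRange {G : LabeledGraph V E L} {k : ℕ} (v : Fin (k + 1) → V)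
    (e : Fin k → E) (hsrc : ∀ i, G.src (e i) = v i.castSucc)
    (htgt : ∀ i, G.tgt (e i) = v i.succ) :
    IsWalk G (v 0) (v (Fin.last k)) ((List.finRange k).map e) := by
  rw [List.map_eq_flatMap]
  exact isWalk_flatMap_finRange v _ fun i => ⟨hsrc i, htgt i⟩

section ReductionGraph

variable {n m : ℕ} (C : Fin m → Fin 3 → Fin n × Bool)

theorem mem_occList {j : Fin n} {b : Bool} {q : Fin m × Fin 3} :
    q ∈ occList C j b ↔ C q.1 q.2 = (j, b) := by
  have hq : q ∈ List.finRange m ×ˢ List.finRange 3 :=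
    List.mem_product.mpr ⟨List.mem_finRange _, List.mem_finRange _⟩
  simp [occList, hq]

theorem nodup_occList (j : Fin n) (b : Bool) : (occList C j b).Nodup :=
  ((List.nodup_finRange m).product (List.nodup_finRange 3)).filter _

theorem branchLen_pos (j : Fin n) (b : Bool) : 0 < branchLen C j b :=
  Nat.lt_of_lt_of_le Nat.one_pos (le_max_left _ _)

theorem branchLen_of_occList_ne_nil {j : Fin n} {b : Bool} (h : occList C j b ≠ []) :
    branchLen C j b = (occList C j b).length :=
  max_eq_right (List.length_pos_iff.mpr h)

def junction (a : ℕ) (h : a ≤ n + m := by omega) : RedV C := Sum.inl ⟨a, by omega⟩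

def branchEdges (j : Fin n) (b : Bool) : List (RedE C) :=
  (List.finRange (branchLen C j b)).map fun r => Sum.inl ⟨j, b, r⟩

def variablePath (τ : Fin n → Bool) : List (RedE C) :=
  (List.finRange n).flatMap fun j => branchEdges C j (τ j)

def clausePath (κ : Fin m → Fin 3) : List (RedE C) :=
  (List.finRange m).map fun i => Sum.inr (i, κ i)

theorem isWalk_branchEdges (j : Fin n) (b : Bool) :
    IsWalk (redGraph n m C) (junction C j) (junction C (j + 1)) (branchEdges C j b) := by
  have hk := branchLen_pos C j b
  let v : Fin (branchLen C j b + 1) → RedV C := fun i =>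
    if h : i.val < branchLen C j b then (redGraph n m C).src (Sum.inl ⟨j, b, ⟨i, h⟩⟩)
    else junction C (j + 1)
  have hsrc (r : Fin (branchLen C j b)) :
      (redGraph n m C).src (Sum.inl ⟨j, b, r⟩) = v r.castSucc := by
    simp [v]
  have htgt (r : Fin (branchLen C j b)) :
      (redGraph n m C).tgt (Sum.inl ⟨j, b, r⟩) = v r.succ := by
    by_cases hr : r.val + 1 < branchLen C j b
    · simp [v, hr, redGraph]; omega
    · simp [v, redGraph, junction, show r.val = branchLen C j b - 1 by omega]; omega
  have hv0 : v 0 = junction C j := by simp [v, hk, redGraph, junction]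
  have hvlast : v (Fin.last _) = junction C (j + 1) := by simp [v]
  rw [← hv0, ← hvlast]
  exact isWalk_map_finRange v _ hsrc htgt

theorem isWalk_variablePath (τ : Fin n → Bool) :
    IsWalk (redGraph n m C) (redS n m C) (junction C n) (variablePath C τ) :=
  isWalk_flatMap_finRange (fun a => junction C a) _ fun j => isWalk_branchEdges C j (τ j)

theorem isWalk_clausePath (κ : Fin m → Fin 3) :
    IsWalk (redGraph n m C) (junction C n) (redT n m C) (clausePath C κ) :=
  isWalk_map_finRange (fun a => junction C (n + a)) _ (fun _ => rfl) fun _ => rfl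

theorem map_lab_branchEdges (j : Fin n) (b : Bool) :
    (branchEdges C j b).map (redGraph n m C).lab =
      if occList C j b = [] then [Sum.inr (j, b)] else (occList C j b).map Sum.inl := by
  split_ifs with h
  · have hlen : branchLen C j b = 1 := by simp [branchLen, h]
    apply List.ext_getElem
    · simp [branchEdges, hlen]
    · intro r _ _
      simp [branchEdges, redGraph, h]
  · have hlen := branchLen_of_occList_ne_nil C h
    apply List.ext_getElem
    · simp [branchEdges, hlen]
    · intro r _ hr
      simp only [List.length_map] at hr
      simp [branchEdges, redGraph, h, hr]

def labelLiteral : RedL n m → Fin n × Bool :=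
  Sum.elim (fun q => C q.1 q.2) id

theorem labelLiteral_of_mem_branchEdges {j : Fin n} {b : Bool} {x : RedL n m}
    (hx : x ∈ (branchEdges C j b).map (redGraph n m C).lab) : labelLiteral C x = (j, b) := by
  rw [map_lab_branchEdges] at hx
  split_ifs at hx
  · simp_all [labelLiteral]
  · obtain ⟨q, hq, rfl⟩ := List.mem_map.mp hx
    exact (mem_occList C).mp hq

theorem nodup_map_lab_branchEdges (j : Fin n) (b : Bool) :
    ((branchEdges C j b).map (redGraph n m C).lab).Nodup := by
  rw [map_lab_branchEdges]
  split_ifs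
  · exact List.nodup_singleton _
  · exact (nodup_occList C j b).map Sum.inl_injective

theorem labelLiteral_of_mem_variablePath {τ : Fin n → Bool} {x : RedL n m}
    (hx : x ∈ (variablePath C τ).map (redGraph n m C).lab) :
    ∃ j, labelLiteral C x = (j, τ j) := by
  rw [variablePath, List.map_flatMap, List.mem_flatMap] at hx
  obtain ⟨j, -, hxj⟩ := hx
  exact ⟨j, labelLiteral_of_mem_branchEdges C hxj⟩

theorem nodup_map_lab_variablePath (τ : Fin n → Bool) :
    ((variablePath C τ).map (redGraph n m C).lab).Nodup := by
  rw [variablePath, List.map_flatMap, List.nodup_flatMap]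
  refine ⟨fun j _ => nodup_map_lab_branchEdges C j (τ j), ?_⟩
  refine (List.nodup_finRange n).imp fun hne => List.disjoint_left.mpr fun _ hx hx' => hne ?_
  exact congrArg Prod.fst
    ((labelLiteral_of_mem_branchEdges C hx).symm.trans (labelLiteral_of_mem_branchEdges C hx'))

theorem map_lab_clausePath (κ : Fin m → Fin 3) :
    (clausePath C κ).map (redGraph n m C).lab = (List.finRange m).map fun i => Sum.inl (i, κ i) :=
  List.map_map ..

theorem feasible_variablePath_append_clausePath {τ : Fin n → Bool} {κ : Fin m → Fin 3}
    (hκ : ∀ i, τ (C i (κ i)).1 ≠ (C i (κ i)).2) :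
    Feasible (redGraph n m C) (variablePath C τ ++ clausePath C κ) := by
  rw [Feasible, List.map_append, map_lab_clausePath]
  refine (nodup_map_lab_variablePath C τ).append
    ((List.nodup_finRange m).map fun _ _ h => congrArg Prod.fst (Sum.inl_injective h)) ?_
  refine List.disjoint_right.mpr fun x hx hx' => ?_
  obtain ⟨i, -, rfl⟩ := List.mem_map.mp hx
  obtain ⟨j, hj⟩ := labelLiteral_of_mem_variablePath C hx'
  exact hκ i (by simp_all [labelLiteral])

theorem mem_variablePath (τ : Fin n → Bool) (j : Fin n) (r : Fin (branchLen C j (τ j))) :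
    Sum.inl ⟨j, τ j, r⟩ ∈ variablePath C τ :=
  List.mem_flatMap.mpr ⟨j, List.mem_finRange j, by simp [branchEdges]⟩

theorem mem_clausePath (κ : Fin m → Fin 3) (i : Fin m) : Sum.inr (i, κ i) ∈ clausePath C κ :=
  List.mem_map.mpr ⟨i, List.mem_finRange i, rfl⟩

end ReductionGraph

/-- If the assignment `σ` satisfies every clause, then the reduction graph has
an `s`-`t` path with pairwise distinct labels which, for each variable `x_j`,
traverses the branch of the polarity NOT chosen by `σ` (if `σ x_j = true` the
negative branch, i.e. polarity `false`; if `σ x_j = false` the positive branch)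
and, for each clause, uses an edge whose literal is made true by `σ`. -/
theorem satisfiable_implies_redGraph_feasible_path (n m : ℕ)
    (C : Fin m → Fin 3 → Fin n × Bool) (σ : Fin n → Bool)
    (hsat : ∀ i : Fin m, ∃ k : Fin 3, σ (C i k).1 = (C i k).2) :
    ∃ p : List (RedE C),
      IsWalk (redGraph n m C) (redS n m C) (redT n m C) p ∧
      Feasible (redGraph n m C) p ∧
      (∀ j : Fin n, ∀ r : Fin (branchLen C j (!(σ j))), Sum.inl ⟨j, !(σ j), r⟩ ∈ p) ∧
      (∀ i : Fin m, ∃ k : Fin 3, Sum.inr (i, k) ∈ p ∧ σ (C i k).1 = (C i k).2) := by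
  choose κ hκ using hsat
  refine ⟨variablePath C (fun j => !σ j) ++ clausePath C κ, ?_, ?_, ?_, ?_⟩
  · exact (isWalk_variablePath C _).append (isWalk_clausePath C κ)
  · exact feasible_variablePath_append_clausePath C fun i => by simp [hκ i]
  · exact fun j r => List.mem_append_left _ (mem_variablePath C (fun j => !σ j) j r)
  · exact fun i => ⟨κ i, List.mem_append_right _ (mem_clausePath C κ i), hκ i⟩
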